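/- Let G = (V,E) be a connected loopless multigraph whose edge weights are independent exponential random variables, w(e) ~ Exp(λ_e) with rates λ_e > 0. Let the algorithm SAM observe one independent sample w̃(e) ~ Exp(λ_e) per edge and output a spanning tree T^SAM(w̃) of minimum total sampled weight (with any measurable tie-breaking; ties occur with probability zero). Let b = |B(G)| be the maximum size of a bond of G and let OPT = min over spanning trees T of Σ_{e∈T} 1/λ_e. Then the expected true cost of SAM satisfies E_{w̃}[ Σ_{e∈T^SAM(w̃)} 1/λ_e ] ≤ b · OPT. -/

import Mathlib

open scoped Classical

/-- A loopless multigraph on vertex type `V` with edge type `E`: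
each edge has two distinct endpoints, parallel edges are allowed. -/
structure Multigraph (V : Type*) (E : Type*) where
  ends : E → Sym2 V
  loopless : ∀ e, ¬ (ends e).IsDiag

namespace Multigraph

variable {V E : Type*} (G : Multigraph V E)

/-- `u` and `v` are joined by a walk using only edges in `F`. -/
def Reach (F : Set E) (u v : V) : Prop :=
  Relation.ReflTransGen (fun x y => ∃ e ∈ F, G.ends e = s(x, y)) u v

/-- The subgraph with edge set `F` (and all vertices) is connected. -/
def ConnectedOn (F : Set E) : Prop := ∀ u v : V, G.Reach F u v

/-- The multigraph is connected. -/
def Connected : Prop := G.ConnectedOn Set.univ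

/-- A cut set of a connected multigraph: removing its edges disconnects the graph. -/
def CutSet (C : Set E) : Prop := ¬ G.ConnectedOn Cᶜ

/-- A bond: an inclusion-wise minimal cut set. -/
def IsBond (C : Set E) : Prop := G.CutSet C ∧ ∀ C' ⊂ C, ¬ G.CutSet C'

/-- The maximum size of a bond, `|B(G)|`. -/
noncomputable def maxBondSize : ℕ := sSup {n | ∃ C : Set E, G.IsBond C ∧ C.ncard = n}

/-- A set of edges is acyclic (contains no cycle) iff no edge of it joins
two vertices that are already connected by the remaining edges. -/
def Acyclic (F : Set E) : Prop :=
  ∀ e ∈ F, ∀ u v : V, G.ends e = s(u, v) → ¬ G.Reach (F \ {e}) u v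

/-- A spanning tree: a set of `|V| - 1` edges containing no cycle. -/
def IsSpanningTree (T : Set E) : Prop :=
  T.ncard = Nat.card V - 1 ∧ G.Acyclic T

/-- The total weight of an edge set. -/
noncomputable def weight (w : E → ℝ) (T : Set E) : ℝ := ∑ᶠ e ∈ T, w e

/-- A minimum spanning tree with respect to edge weights `w`. -/
def IsMST (w : E → ℝ) (T : Set E) : Prop :=
  G.IsSpanningTree T ∧ ∀ T', G.IsSpanningTree T' → weight w T ≤ weight w T'

/-- `f` lies on the (unique) `u`-`v` path in the tree `T`: it belongs to `T` and
removing it from `T` disconnects `u` from `v`. -/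
def OnPath (T : Set E) (u v : V) (f : E) : Prop :=
  f ∈ T ∧ ¬ G.Reach (T \ {f}) u v

/-- The vertex identification produced by contracting the edge `e`. -/
def contractSetoid (e : E) : Setoid V where
  r x y := x = y ∨ G.ends e = s(x, y)
  iseqv := by
    refine ⟨fun x => Or.inl rfl, ?_, ?_⟩
    · rintro x y (rfl | h)
      · exact Or.inl rfl
      · right; rwa [Sym2.eq_swap]
    · rintro x y z (rfl | hxy) (rfl | hyz)
      · exact Or.inl rfl
      · exact Or.inr hyz
      · exact Or.inr hxy
      · rw [hxy] at hyz
        rw [Sym2.eq_iff] at hyz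
        rcases hyz with ⟨rfl, rfl⟩ | ⟨rfl, -⟩
        · exact Or.inl rfl
        · exact Or.inl rfl

/-- The contraction `G/e`: the endpoints of `e` are merged into a single vertex,
`e` is removed, and all resulting loops (the edges parallel to `e`) are deleted. -/
def contract (e : E) :
    Multigraph (Quotient (G.contractSetoid e)) {f : E // f ≠ e ∧ G.ends f ≠ G.ends e} where
  ends f := (G.ends f.1).map (Quotient.mk (G.contractSetoid e))
  loopless := by
    rintro ⟨f, hfe, hff⟩ h
    obtain ⟨x, y, hf⟩ : ∃ x y, G.ends f = s(x, y) := by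
      induction G.ends f using Sym2.inductionOn with
      | hf x y => exact ⟨x, y, rfl⟩
    simp only [hf, Sym2.map_pair_eq] at h
    rcases Quotient.eq''.mp (h : _ = _) with (rfl | hxy)
    · exact G.loopless f (by rw [hf]; exact rfl)
    · exact hff (by rw [hf, hxy])

end Multigraph

namespace Multigraph

variable {V E : Type*} {G : Multigraph V E}

lemma exists_ends (e : E) : ∃ p q : V, G.ends e = s(p, q) := by
  induction G.ends e using Sym2.inductionOn with
  | hf x y => exact ⟨x, y, rfl⟩

lemma Reach.refl {F : Set E} (u : V) : G.Reach F u u := Relation.ReflTransGen.refl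

lemma Reach.trans {F : Set E} {u v w : V} (h : G.Reach F u v) (h' : G.Reach F v w) :
    G.Reach F u w := Relation.ReflTransGen.trans h h'

lemma Reach.symm {F : Set E} {u v : V} (h : G.Reach F u v) : G.Reach F v u := by
  refine @Std.Symm.symm _ _ (@Relation.ReflTransGen.stdSymm _ _ ⟨?_⟩) _ _ h
  rintro x y ⟨e, he, hends⟩
  exact ⟨e, he, by rwa [Sym2.eq_swap]⟩

lemma reach_step {F : Set E} {e : E} {u v : V} (he : e ∈ F) (h : G.ends e = s(u, v)) :
    G.Reach F u v := Relation.ReflTransGen.single ⟨e, he, h⟩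

lemma Reach.mono {F F' : Set E} (hFF : F ⊆ F') {u v : V} (h : G.Reach F u v) :
    G.Reach F' u v := by
  refine Relation.ReflTransGen.mono ?_ _ _ h
  rintro x y ⟨e, he, hends⟩
  exact ⟨e, hFF he, hends⟩

/-- Walk-breaking: a walk in `F` between `S`-unreachable vertices contains an edge whose
endpoints are `S`-unreachable. -/
lemma exists_bad_step {F S : Set E} {u v : V} (hF : G.Reach F u v) (hS : ¬ G.Reach S u v) :
    ∃ f ∈ F, ∃ p q : V, G.ends f = s(p, q) ∧ ¬ G.Reach S p q := by
  induction hF with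
  | refl => exact absurd (Reach.refl u) hS
  | @tail w v hw step ih =>
      by_cases h : G.Reach S u w
      · obtain ⟨f, hf, hends⟩ := step
        refine ⟨f, hf, w, v, hends, fun hr => hS (h.trans hr)⟩
      · exact ih h

/-- Walk decomposition with respect to removal of one edge `f`. -/
lemma reach_avoid {F : Set E} {f : E} {p q : V} (hf : G.ends f = s(p, q)) {u v : V}
    (h : G.Reach F u v) :
    G.Reach (F \ {f}) u v ∨
      ((G.Reach (F \ {f}) u p ∨ G.Reach (F \ {f}) u q) ∧
       (G.Reach (F \ {f}) p v ∨ G.Reach (F \ {f}) q v)) := by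
  induction h with
  | refl => exact Or.inl (Reach.refl u)
  | @tail w v hw step ih =>
      obtain ⟨g, hg, hends⟩ := step
      by_cases hgf : g = f
      · subst hgf
        rw [hf, Sym2.eq_iff] at hends
        rcases hends with ⟨rfl, rfl⟩ | ⟨rfl, rfl⟩
        · refine Or.inr ⟨?_, Or.inr (Reach.refl _)⟩
          rcases ih with h | h
          · exact Or.inl h
          · exact h.1
        · refine Or.inr ⟨?_, Or.inl (Reach.refl _)⟩
          rcases ih with h | h
          · exact Or.inr h
          · exact h.1
      · have hstep : G.Reach (F \ {f}) w v := reach_step ⟨hg, hgf⟩ hends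
        rcases ih with h | ⟨h1, h2⟩
        · exact Or.inl (h.trans hstep)
        · refine Or.inr ⟨h1, ?_⟩
          rcases h2 with h2 | h2
          · exact Or.inl (h2.trans hstep)
          · exact Or.inr (h2.trans hstep)

lemma Acyclic.mono {F F' : Set E} (h : F' ⊆ F) (hF : G.Acyclic F) : G.Acyclic F' :=
  fun e he u v hends hr =>
    hF e (h he) u v hends (hr.mono (Set.diff_subset_diff_left h))

/-- Minimal connecting subsets exist. -/
lemma exists_minimal_connecting [Finite E] {F : Set E} {u v : V} (h : G.Reach F u v) :
    ∃ F₀ ⊆ F, G.Reach F₀ u v ∧ ∀ f ∈ F₀, ¬ G.Reach (F₀ \ {f}) u v := by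
  classical
  set S : Set ℕ := {n | ∃ F₀ ⊆ F, F₀.ncard = n ∧ G.Reach F₀ u v} with hS
  have hne : S.Nonempty := ⟨F.ncard, F, le_refl _, rfl, h⟩
  obtain ⟨F₀, hF₀F, hcard, hreach⟩ := Nat.sInf_mem hne
  refine ⟨F₀, hF₀F, hreach, fun f hf hr => ?_⟩
  have hlt : (F₀ \ {f}).ncard < F₀.ncard :=
    Set.ncard_diff_singleton_lt_of_mem hf (Set.toFinite _)
  have : (F₀ \ {f}).ncard ∈ S := ⟨F₀ \ {f}, (Set.diff_subset).trans hF₀F, rfl, hr⟩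
  have := Nat.sInf_le this
  omega

/-- An edge essential in a minimal connecting subset is essential in any acyclic superset. -/
lemma essential_of_minimal {F F₀ : Set E} (hacyc : G.Acyclic F) (hsub : F₀ ⊆ F)
    {u v : V} {f : E} (hreach : G.Reach F₀ u v) (hess : ¬ G.Reach (F₀ \ {f}) u v)
    (hfF₀ : f ∈ F₀) : ¬ G.Reach (F \ {f}) u v := by
  obtain ⟨p, q, hpq⟩ := exists_ends (G := G) f
  intro hFr
  have hM : F₀ \ {f} ⊆ F \ {f} := Set.diff_subset_diff_left hsub
  have hacf : ¬ G.Reach (F \ {f}) p q := hacyc f (hsub hfF₀) p q hpq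
  rcases reach_avoid hpq hreach with h | ⟨hu, hv⟩
  · exact hess h
  rcases hu with hu | hu <;> rcases hv with hv | hv
  · exact hess (hu.trans hv)
  · exact hacf (((hu.mono hM).symm.trans hFr).trans (hv.mono hM).symm)
  · exact hacf ((((hu.mono hM).symm.trans hFr).trans (hv.mono hM).symm).symm)
  · exact hess (hu.trans hv)

end Multigraph
namespace Multigraph

variable {V E : Type*} {G : Multigraph V E}

/-- The connectivity setoid of the subgraph with edge set `F`. -/
def reachSetoid (G : Multigraph V E) (F : Set E) : Setoid V :=
  ⟨G.Reach F, ⟨Reach.refl, Reach.symm, Reach.trans⟩⟩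

lemma card_succ_le_of_surj_not_inj {A B : Type*} [Finite A] {f : A → B}
    (hsurj : Function.Surjective f) {a₁ a₂ : A} (hne : a₁ ≠ a₂) (heq : f a₁ = f a₂) :
    Nat.card B + 1 ≤ Nat.card A := by
  classical
  haveI : Fintype A := Fintype.ofFinite A
  haveI : Finite B := Finite.of_surjective f hsurj
  haveI : Fintype B := Fintype.ofFinite B
  have hsurj' : Function.Surjective (fun a : {a : A // a ≠ a₂} => f a.1) := by
    intro b
    obtain ⟨a, rfl⟩ := hsurj b
    by_cases h : a = a₂
    · exact ⟨⟨a₁, hne⟩, by show f a₁ = f a; rw [heq, h]⟩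
    · exact ⟨⟨a, h⟩, rfl⟩
  have h1 : Fintype.card B ≤ Fintype.card {a : A // a ≠ a₂} :=
    Fintype.card_le_of_surjective _ hsurj'
  have h2 : Fintype.card {a : A // a ≠ a₂} = Fintype.card A - 1 := by
    simp [Fintype.card_subtype_compl]
  have h3 : 1 ≤ Fintype.card A := Fintype.card_pos_iff.mpr ⟨a₂⟩
  simp only [Nat.card_eq_fintype_card]
  omega

lemma quot_card_succ_le [Finite V] {F : Set E} {e : E} {u v : V}
    (he : e ∈ F) (hends : G.ends e = s(u, v)) (hne : ¬ G.Reach (F \ {e}) u v) :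
    Nat.card (Quotient (G.reachSetoid F)) + 1 ≤ Nat.card (Quotient (G.reachSetoid (F \ {e}))) := by
  have hmono : ∀ x y : V, G.Reach (F \ {e}) x y → G.Reach F x y :=
    fun x y h => h.mono Set.diff_subset
  let φ : Quotient (G.reachSetoid (F \ {e})) → Quotient (G.reachSetoid F) :=
    Quotient.map id (fun x y h => hmono x y h)
  have hsurj : Function.Surjective φ := by
    intro b
    induction b using Quotient.inductionOn with
    | h x => exact ⟨Quotient.mk _ x, rfl⟩
  have hneq : (Quotient.mk (G.reachSetoid (F \ {e})) u) ≠ Quotient.mk _ v := by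
    intro h
    exact hne (Quotient.exact h)
  have heq : φ (Quotient.mk _ u) = φ (Quotient.mk _ v) := by
    have : G.Reach F u v := reach_step he hends
    exact Quotient.sound this
  exact card_succ_le_of_surj_not_inj hsurj hneq heq

lemma acyclic_card_le [Finite V] [Finite E] :
    ∀ (n : ℕ) (F : Set E), F.ncard = n → G.Acyclic F →
      Nat.card (Quotient (G.reachSetoid F)) + F.ncard ≤ Nat.card V := by
  intro n
  induction n using Nat.strong_induction_on with
  | _ n ih =>
    intro F hn hacyc
    rcases Set.eq_empty_or_nonempty F with rfl | ⟨e, he⟩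
    · simp only [Set.ncard_empty, add_zero]
      exact Nat.card_le_card_of_surjective _ (Quotient.mk''_surjective)
    · obtain ⟨u, v, hends⟩ := exists_ends (G := G) e
      have hbad := hacyc e he u v hends
      have hstep := quot_card_succ_le he hends hbad
      have hcard : (F \ {e}).ncard < n := by
        rw [← hn]; exact Set.ncard_diff_singleton_lt_of_mem he (Set.toFinite _)
      have hrec := ih _ hcard (F \ {e}) rfl (hacyc.mono Set.diff_subset)
      have hsum : F.ncard = (F \ {e}).ncard + 1 := by
        rw [Set.ncard_diff_singleton_of_mem he]
        have : 0 < F.ncard := (Set.ncard_pos (Set.toFinite _)).mpr ⟨e, he⟩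
        omega
      omega

lemma IsSpanningTree.connectedOn [Finite V] [Finite E] {T : Set E}
    (hT : G.IsSpanningTree T) : G.ConnectedOn T := by
  intro u v
  have hV : 1 ≤ Nat.card V := Nat.card_pos_iff.mpr ⟨⟨u⟩, inferInstance⟩
  have h := acyclic_card_le T.ncard T rfl hT.2
  rw [hT.1] at h
  have hle : Nat.card (Quotient (G.reachSetoid T)) ≤ 1 := by omega
  haveI : Subsingleton (Quotient (G.reachSetoid T)) := by
    rwa [Finite.card_le_one_iff_subsingleton] at hle
  exact
    Quotient.exact (Subsingleton.elim (Quotient.mk (G.reachSetoid T) u) (Quotient.mk _ v))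

end Multigraph

namespace Multigraph

variable {V E : Type*} {G : Multigraph V E}

lemma weight_eq_sum [Fintype E] (w : E → ℝ) (S : Set E) (hS : S.Finite) :
    Multigraph.weight w S = ∑ e ∈ hS.toFinset, w e := by
  rw [Multigraph.weight, ← finsum_mem_coe_finset, Set.Finite.coe_toFinset]

/-- The exchange step: swapping `e` for an edge `f` crossing the cut of `e`. -/
lemma insert_spanning [Finite V] [Finite E] {T : Set E} (hT : G.IsSpanningTree T)
    {e f : E} (he : e ∈ T) (hfT : f ∉ T) {p q : V} (hf : G.ends f = s(p, q))
    (hcross : ¬ G.Reach (T \ {e}) p q) : G.IsSpanningTree (insert f (T \ {e})) := by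
  have hfTe : f ∉ T \ {e} := fun h => hfT h.1
  constructor
  · rw [Set.ncard_insert_of_notMem hfTe (Set.toFinite _),
      Set.ncard_diff_singleton_of_mem he]
    have : 0 < T.ncard := (Set.ncard_pos (Set.toFinite _)).mpr ⟨e, he⟩
    have h1 := hT.1
    omega
  · intro g hg a b hab hr
    rcases hg with rfl | hgT
    · -- g = f
      have hsub : insert g (T \ {e}) \ {g} ⊆ T \ {e} := by
        intro x hx
        rcases hx.1 with rfl | h
        · exact absurd rfl hx.2
        · exact h
      have hr' : G.Reach (T \ {e}) a b := hr.mono hsub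
      rw [hf, Sym2.eq_iff] at hab
      rcases hab with ⟨rfl, rfl⟩ | ⟨rfl, rfl⟩
      · exact hcross hr'
      · exact hcross hr'.symm
    · -- g ∈ T \ {e}
      have hgf : g ≠ f := fun h => hfT (h ▸ hgT.1)
      have hsub : insert f (T \ {e}) \ {g} ⊆ insert f ((T \ {e}) \ {g}) := by
        intro x hx
        rcases hx.1 with rfl | h
        · exact Set.mem_insert _ _
        · exact Set.mem_insert_of_mem _ ⟨h, hx.2⟩
      have hr2 := hr.mono hsub
      have hrem : insert f ((T \ {e}) \ {g}) \ {f} ⊆ (T \ {e}) \ {g} := by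
        intro x hx
        rcases hx.1 with rfl | h
        · exact absurd rfl hx.2
        · exact h
      have hS : (T \ {e}) \ {g} ⊆ T \ {g} :=
        fun x hx => ⟨hx.1.1, hx.2⟩
      have hacg : ¬ G.Reach (T \ {g}) a b := hT.2 g hgT.1 a b hab
      have hstep : G.Reach (T \ {e}) a b := reach_step hgT hab
      rcases reach_avoid hf hr2 with h | ⟨ha, hb⟩
      · exact hacg ((h.mono hrem).mono hS)
      · have ha' := ha.imp (fun h => (h.mono hrem)) (fun h => (h.mono hrem))
        have hb' := hb.imp (fun h => (h.mono hrem)) (fun h => (h.mono hrem))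
        have hSe : (T \ {e}) \ {g} ⊆ T \ {e} := Set.diff_subset
        rcases ha' with ha' | ha' <;> rcases hb' with hb' | hb'
        · exact hacg ((ha'.trans hb').mono hS)
        · exact hcross (((ha'.mono hSe).symm.trans hstep).trans (hb'.mono hSe).symm)
        · exact hcross ((((ha'.mono hSe).symm.trans hstep).trans (hb'.mono hSe).symm).symm)
        · exact hacg ((ha'.trans hb').mono hS)

lemma weight_exchange [Finite E] (w : E → ℝ) {T : Set E} {e f : E}
    (he : e ∈ T) (hfT : f ∉ T) :
    Multigraph.weight w (insert f (T \ {e})) = Multigraph.weight w T - w e + w f := by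
  have hfTe : f ∉ T \ {e} := fun h => hfT h.1
  have heTe : e ∉ T \ {e} := by simp
  have hins : insert e (T \ {e}) = T := by
    rw [Set.insert_diff_singleton]; exact Set.insert_eq_self.mpr he
  have h1 : Multigraph.weight w (insert f (T \ {e})) = w f + Multigraph.weight w (T \ {e}) :=
    finsum_mem_insert w hfTe (Set.toFinite _)
  have h2 : Multigraph.weight w T = w e + Multigraph.weight w (T \ {e}) := by
    conv_lhs => rw [← hins]
    exact finsum_mem_insert w heTe (Set.toFinite _)
  rw [h1, h2]; ring

end Multigraph

namespace Multigraph

variable {V E : Type*} {G : Multigraph V E}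

/-- The fundamental cut of an edge `f` with respect to a spanning tree `T`. -/
def fundCut (G : Multigraph V E) (T : Set E) (f : E) : Set E :=
  {g | ∃ a b, G.ends g = s(a, b) ∧ ¬ G.Reach (T \ {f}) a b}

lemma mem_fundCut {T : Set E} {f g : E} {a b : V} (hab : G.ends g = s(a, b)) :
    g ∈ G.fundCut T f ↔ ¬ G.Reach (T \ {f}) a b := by
  constructor
  · rintro ⟨a', b', hab', hr⟩ h
    rw [hab, Sym2.eq_iff] at hab'
    rcases hab' with ⟨rfl, rfl⟩ | ⟨rfl, rfl⟩
    · exact hr h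
    · exact hr h.symm
  · exact fun h => ⟨a, b, hab, h⟩

lemma self_mem_fundCut {T : Set E} {f : E} (hT : G.Acyclic T) (hfT : f ∈ T) :
    f ∈ G.fundCut T f := by
  obtain ⟨p, q, hpq⟩ := exists_ends (G := G) f
  exact ⟨p, q, hpq, hT f hfT p q hpq⟩

lemma reach_of_compl_fundCut {T : Set E} {f : E} {u v : V}
    (h : G.Reach ((G.fundCut T f)ᶜ) u v) : G.Reach (T \ {f}) u v := by
  induction h with
  | refl => exact Reach.refl u
  | @tail w v hw step ih =>
      obtain ⟨g, hg, hends⟩ := step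
      exact ih.trans ((mem_fundCut hends).not_left.mp hg)

lemma side_of [Finite V] [Finite E] {T : Set E} {f : E} (hT : G.IsSpanningTree T)
    {p q : V} (hpq : G.ends f = s(p, q)) (x : V) :
    G.Reach (T \ {f}) x p ∨ G.Reach (T \ {f}) x q := by
  rcases reach_avoid hpq (hT.connectedOn x p) with h | ⟨h1, h2⟩
  · exact Or.inl h
  · exact h1

lemma fundCut_isBond [Finite V] [Finite E] {T : Set E} {f : E}
    (hT : G.IsSpanningTree T) (hfT : f ∈ T) : G.IsBond (G.fundCut T f) := by
  obtain ⟨p, q, hpq⟩ := exists_ends (G := G) f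
  have hacyc : ¬ G.Reach (T \ {f}) p q := hT.2 f hfT p q hpq
  constructor
  · exact fun hcon => hacyc (reach_of_compl_fundCut (hcon p q))
  · intro C' hC' hcut
    apply hcut
    obtain ⟨g, hgC, hgC'⟩ := Set.exists_of_ssubset hC'
    obtain ⟨a, b, hab, hnr⟩ := hgC
    have hTsub : T \ {f} ⊆ C'ᶜ := by
      intro h hh
      intro hmem
      obtain ⟨c, d, hcd⟩ := exists_ends (G := G) h
      exact (mem_fundCut hcd).mp (hC'.subset hmem) (reach_step hh hcd)
    have hmono : ∀ {x y : V}, G.Reach (T \ {f}) x y → G.Reach C'ᶜ x y :=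
      fun h => h.mono hTsub
    have hg' : g ∈ C'ᶜ := hgC'
    have hstep : G.Reach C'ᶜ a b := reach_step hg' hab
    have hres : G.Reach C'ᶜ p q := by
      rcases side_of hT hpq a with ha | ha <;> rcases side_of hT hpq b with hb | hb
      · exact absurd (ha.trans hb.symm) hnr
      · exact ((hmono ha.symm).trans hstep).trans (hmono hb)
      · exact ((hmono hb.symm).trans hstep.symm).trans (hmono ha)
      · exact absurd (ha.trans hb.symm) hnr
    intro u v
    rcases side_of hT hpq u with hu | hu <;> rcases side_of hT hpq v with hv | hv
    · exact (hmono hu).trans (hmono hv.symm)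
    · exact ((hmono hu).trans hres).trans (hmono hv.symm)
    · exact ((hmono hu).trans hres.symm).trans (hmono hv.symm)
    · exact (hmono hu).trans (hmono hv.symm)

lemma fundCut_ncard_le [Finite V] [Finite E] {T : Set E} {f : E}
    (hT : G.IsSpanningTree T) (hfT : f ∈ T) :
    (G.fundCut T f).ncard ≤ G.maxBondSize := by
  apply le_csSup
  · refine ⟨Nat.card E, ?_⟩
    rintro n ⟨C, _, rfl⟩
    rw [← Set.ncard_univ]
    exact Set.ncard_le_ncard (Set.subset_univ _) (Set.toFinite _)
  · exact ⟨G.fundCut T f, fundCut_isBond hT hfT, rfl⟩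

lemma one_le_fundCut_ncard [Finite V] [Finite E] {T : Set E} {f : E}
    (hT : G.IsSpanningTree T) (hfT : f ∈ T) : 1 ≤ (G.fundCut T f).ncard :=
  (Set.ncard_pos (Set.toFinite _)).mpr ⟨f, self_mem_fundCut hT.2 hfT⟩

end Multigraph

namespace Multigraph

variable {V E : Type*} {G : Multigraph V E}

/-- Key step: any non-`Tstar` edge of a sampled MST is, for some `f ∈ Tstar`, in the
fundamental cut of `f` and has sampled weight at most that of `f`. -/
lemma key_step [Finite V] [Finite E] {T Tstar : Set E} (hT : G.IsSpanningTree T)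
    (hTs : G.IsSpanningTree Tstar) {x : E → ℝ}
    (hmin : ∀ T', G.IsSpanningTree T' → Multigraph.weight x T ≤ Multigraph.weight x T')
    {e : E} (he : e ∈ T) (heTs : e ∉ Tstar) :
    ∃ f ∈ Tstar, e ∈ G.fundCut Tstar f ∧ x e ≤ x f := by
  obtain ⟨u, v, huv⟩ := exists_ends (G := G) e
  have hcut : ¬ G.Reach (T \ {e}) u v := hT.2 e he u v huv
  have hreach : G.Reach Tstar u v := hTs.connectedOn u v
  obtain ⟨F₀, hF₀, hF₀r, hF₀min⟩ := exists_minimal_connecting hreach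
  obtain ⟨f, hfF₀, p, q, hpq, hnr⟩ := exists_bad_step hF₀r hcut
  have hfTs : f ∈ Tstar := hF₀ hfF₀
  have hcross : ¬ G.Reach (Tstar \ {f}) u v :=
    essential_of_minimal hTs.2 hF₀ hF₀r (hF₀min f hfF₀) hfF₀
  refine ⟨f, hfTs, ⟨u, v, huv, hcross⟩, ?_⟩
  by_contra hlt
  push_neg at hlt
  have hfT : f ∉ T := by
    intro hfT
    exact hnr (reach_step ⟨hfT, fun h => heTs (h ▸ hfTs)⟩ hpq)
  have hsp := insert_spanning hT he hfT hpq hnr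
  have hge := hmin _ hsp
  rw [weight_exchange x he hfT] at hge
  linarith

end Multigraph

section Probability

open MeasureTheory ProbabilityTheory Real

lemma expMeasure_eq_withDensity (r : ℝ) :
    expMeasure r = MeasureTheory.volume.withDensity (exponentialPDF r) := rfl

lemma measurable_exponentialPDF (r : ℝ) : Measurable (exponentialPDF r) :=
  (measurable_exponentialPDFReal r).ennreal_ofReal

lemma expMeasure_Ici {r : ℝ} (hr : 0 < r) {a : ℝ} (ha : 0 ≤ a) :
    expMeasure r (Set.Ici a) = ENNReal.ofReal (rexp (-(r * a))) := by
  haveI := isProbabilityMeasure_expMeasure hr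
  have hsing : expMeasure r {a} = 0 := by
    rw [expMeasure_eq_withDensity, withDensity_apply _ (measurableSet_singleton a)]
    exact setLIntegral_measure_zero _ _ (Real.volume_singleton)
  have hIio : expMeasure r (Set.Iio a) = expMeasure r (Set.Iic a) := by
    rw [← Set.Iio_union_right,
      measure_union (by simp) (measurableSet_singleton a), hsing, add_zero]
  have hIic : expMeasure r (Set.Iic a) = ENNReal.ofReal (1 - rexp (-(r * a))) := by
    rw [expMeasure_eq_withDensity, withDensity_apply _ measurableSet_Iic,
      lintegral_exponentialPDF_eq_antiDeriv hr, if_pos ha]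
  have hle1 : rexp (-(r * a)) ≤ 1 := by
    rw [← Real.exp_zero]
    exact Real.exp_le_exp.mpr (by nlinarith)
  have hcompl : expMeasure r (Set.Ici a) = 1 - expMeasure r (Set.Iio a) := by
    rw [← Set.compl_Iio, measure_compl measurableSet_Iio (measure_ne_top _ _), measure_univ]
  rw [hcompl, hIio, hIic, ← ENNReal.ofReal_one, ← ENNReal.ofReal_sub 1 (by linarith)]
  congr 1
  ring

variable {E : Type*} [Fintype E]

lemma pi_map_pair (lam : E → ℝ) (hlam : ∀ e, 0 < lam e) {e f : E} (hef : e ≠ f) :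
    (Measure.pi fun i => expMeasure (lam i)).map (fun x => (x e, x f)) =
      (expMeasure (lam e)).prod (expMeasure (lam f)) := by
  haveI : ∀ i, IsProbabilityMeasure (expMeasure (lam i)) :=
    fun i => isProbabilityMeasure_expMeasure (hlam i)
  have hmeasPair : Measurable (fun x : E → ℝ => (x e, x f)) :=
    (measurable_pi_apply e).prodMk (measurable_pi_apply f)
  refine (Measure.prod_eq fun s t hs ht => ?_).symm
  rw [Measure.map_apply hmeasPair (hs.prod ht)]
  classical
  have hpre : (fun x : E → ℝ => (x e, x f)) ⁻¹' (s ×ˢ t) =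
      Set.pi Set.univ (fun i => if i = e then s else if i = f then t else Set.univ) := by
    ext x
    simp only [Set.mem_preimage, Set.mem_prod, Set.mem_pi, Set.mem_univ, true_implies]
    constructor
    · rintro ⟨h1, h2⟩ i
      by_cases hie : i = e
      · subst hie; rw [if_pos rfl]; exact h1
      · rw [if_neg hie]
        by_cases hif : i = f
        · subst hif; rw [if_pos rfl]; exact h2
        · rw [if_neg hif]; trivial
    · intro h
      constructor
      · have := h e; rwa [if_pos rfl] at this
      · have := h f; rwa [if_neg (Ne.symm hef), if_pos rfl] at this
  rw [hpre, Measure.pi_pi]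
  have hsub := Finset.prod_subset (Finset.subset_univ ({e, f} : Finset E))
    (f := fun i => expMeasure (lam i) (if i = e then s else if i = f then t else Set.univ))
    (fun i _ hi => by
      simp only [Finset.mem_insert, Finset.mem_singleton, not_or] at hi
      show expMeasure (lam i) (if i = e then s else if i = f then t else Set.univ) = 1
      rw [if_neg hi.1, if_neg hi.2]
      exact measure_univ)
  rw [← hsub, Finset.prod_pair hef, if_pos rfl, if_neg (Ne.symm hef), if_pos rfl]

lemma exp_pair_prob (lam : E → ℝ) (hlam : ∀ e, 0 < lam e) {e f : E} (hef : e ≠ f) :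
    (Measure.pi fun i => expMeasure (lam i)) {x | x e ≤ x f} =
      ENNReal.ofReal (lam e / (lam e + lam f)) := by
  haveI : ∀ i, IsProbabilityMeasure (expMeasure (lam i)) :=
    fun i => isProbabilityMeasure_expMeasure (hlam i)
  have hmeasPair : Measurable (fun x : E → ℝ => (x e, x f)) :=
    (measurable_pi_apply e).prodMk (measurable_pi_apply f)
  have hS : MeasurableSet {p : ℝ × ℝ | p.1 ≤ p.2} :=
    measurableSet_le measurable_fst measurable_snd
  have hset : {x : E → ℝ | x e ≤ x f} = (fun x : E → ℝ => (x e, x f)) ⁻¹' {p | p.1 ≤ p.2} := rfl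
  rw [hset, ← Measure.map_apply hmeasPair hS, pi_map_pair lam hlam hef, Measure.prod_apply hS]
  have hpre : ∀ a : ℝ, (Prod.mk a ⁻¹' {p : ℝ × ℝ | p.1 ≤ p.2}) = Set.Ici a := by
    intro a; ext b; simp [Set.mem_Ici]
  simp_rw [hpre]
  have htail_meas : Measurable fun a : ℝ => expMeasure (lam f) (Set.Ici a) :=
    Antitone.measurable (fun a b hab => measure_mono (Set.Ici_subset_Ici.mpr hab))
  rw [expMeasure_eq_withDensity (lam e),
    lintegral_withDensity_eq_lintegral_mul _ (measurable_exponentialPDF _) htail_meas]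
  have hsum : 0 < lam e + lam f := by have := hlam e; have := hlam f; linarith
  have hpt : ∀ a : ℝ, exponentialPDF (lam e) a * expMeasure (lam f) (Set.Ici a) =
      ENNReal.ofReal (lam e / (lam e + lam f)) * exponentialPDF (lam e + lam f) a := by
    intro a
    rcases lt_or_ge a 0 with ha | ha
    · rw [exponentialPDF_of_neg ha, exponentialPDF_of_neg ha, zero_mul, mul_zero]
    · rw [exponentialPDF_of_nonneg ha, exponentialPDF_of_nonneg ha, expMeasure_Ici (hlam f) ha,
        ← ENNReal.ofReal_mul (mul_nonneg (hlam e).le (Real.exp_nonneg _)),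
        ← ENNReal.ofReal_mul (div_nonneg (hlam e).le hsum.le)]
      congr 1
      have hx : -(lam e * a) + -(lam f * a) = -((lam e + lam f) * a) := by ring
      rw [mul_assoc, ← Real.exp_add, hx]
      field_simp
  calc ∫⁻ a, exponentialPDF (lam e) a * expMeasure (lam f) (Set.Ici a)
      = ∫⁻ a, ENNReal.ofReal (lam e / (lam e + lam f)) * exponentialPDF (lam e + lam f) a :=
        lintegral_congr hpt
    _ = ENNReal.ofReal (lam e / (lam e + lam f)) * ∫⁻ a, exponentialPDF (lam e + lam f) a :=
        lintegral_const_mul _ (measurable_exponentialPDF _)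
    _ = ENNReal.ofReal (lam e / (lam e + lam f)) := by
        rw [lintegral_exponentialPDF_eq_one hsum, mul_one]

end Probability



open Multigraph MeasureTheory ProbabilityTheory in
/-- For a connected loopless multigraph with independent exponential edge
weights of rates `λ_e > 0`, the algorithm that outputs a minimum spanning tree for one
independent exponential sample per edge (any measurable tie-breaking) has expected true cost
at most `b · OPT`, where `b = |B(G)|` and `OPT` is the minimum expected weight of a spanning
tree (the expected true cost of the output tree is `E[Σ_{e ∈ T^SAM} 1/λ_e]`). -/
theorem sample_mst_expected_cost_le {V E : Type*} [Finite V] [Fintype E]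
    (G : Multigraph V E) (hG : G.Connected)
    (lam : E → ℝ) (hlam : ∀ e, 0 < lam e)
    (TSAM : (E → ℝ) → Set E)
    (hmeas : ∀ t : Set E, MeasurableSet {x : E → ℝ | TSAM x = t})
    (hopt : ∀ x : E → ℝ, G.IsSpanningTree (TSAM x) ∧
      ∀ T, G.IsSpanningTree T → Multigraph.weight x (TSAM x) ≤ Multigraph.weight x T) :
    ∫ x, Multigraph.weight (fun e => 1 / lam e) (TSAM x)
        ∂(Measure.pi fun e : E => expMeasure (lam e))
      ≤ (G.maxBondSize : ℝ) *
        sInf {c : ℝ | ∃ T, G.IsSpanningTree T ∧ c = Multigraph.weight (fun e => 1 / lam e) T} := by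
  classical
  haveI : ∀ e : E, IsProbabilityMeasure (expMeasure (lam e)) :=
    fun e => isProbabilityMeasure_expMeasure (hlam e)
  set μw : E → ℝ := fun e => 1 / lam e with hμw
  have hμw0 : ∀ e, 0 ≤ μw e := fun e => by
    simp only [hμw]; exact div_nonneg zero_le_one (hlam e).le
  set Pr := Measure.pi fun e : E => expMeasure (lam e) with hPdef
  haveI : IsProbabilityMeasure Pr := by rw [hPdef]; infer_instance
  -- the optimal tree
  obtain ⟨Tstar, hTs, hmin⟩ : ∃ T, G.IsSpanningTree T ∧ ∀ T', G.IsSpanningTree T' →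
      Multigraph.weight μw T ≤ Multigraph.weight μw T' := by
    obtain ⟨T, hT, hTmin⟩ := Set.exists_min_image {T : Set E | G.IsSpanningTree T}
      (Multigraph.weight μw) (Set.toFinite _) ⟨TSAM 0, (hopt 0).1⟩
    exact ⟨T, hT, fun T' h => hTmin T' h⟩
  have hsInf : sInf {c : ℝ | ∃ T, G.IsSpanningTree T ∧ c = Multigraph.weight μw T}
      = Multigraph.weight μw Tstar := by
    apply le_antisymm
    · exact csInf_le ⟨Multigraph.weight μw Tstar,
        by rintro c ⟨T, hT, rfl⟩; exact hmin T hT⟩ ⟨Tstar, hTs, rfl⟩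
    · exact le_csInf ⟨_, Tstar, hTs, rfl⟩ (by rintro c ⟨T, hT, rfl⟩; exact hmin T hT)
  rw [hsInf]
  set b := G.maxBondSize with hb
  -- events
  set A : E → Set (E → ℝ) := fun e => {x | e ∈ TSAM x} with hA
  have hAmeas : ∀ e, MeasurableSet (A e) := by
    intro e
    have : A e = ⋃ (t : Set E) (_ : e ∈ t), {x | TSAM x = t} := by
      ext x
      simp only [hA, Set.mem_setOf_eq, Set.mem_iUnion]
      exact ⟨fun h => ⟨TSAM x, h, rfl⟩, by rintro ⟨t, ht, rfl⟩; exact ht⟩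
    rw [this]
    exact MeasurableSet.iUnion fun t => MeasurableSet.iUnion fun _ => hmeas t
  -- rewrite the integral
  have hrepr : ∀ x : E → ℝ, Multigraph.weight μw (TSAM x)
      = ∑ e : E, Set.indicator (A e) (fun _ => μw e) x := by
    intro x
    rw [weight_eq_sum μw _ (Set.toFinite _)]
    have htf : (Set.toFinite (TSAM x)).toFinset = Finset.univ.filter (fun e => e ∈ TSAM x) := by
      ext e; simp
    rw [htf, Finset.sum_filter]
    exact Finset.sum_congr rfl fun e _ => by simp [Set.indicator_apply, hA]
  have hint : ∀ e : E, Integrable (Set.indicator (A e) (fun _ => μw e)) Pr :=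
    fun e => (integrable_const _).indicator (hAmeas e)
  have hIeq : ∫ x, Multigraph.weight μw (TSAM x) ∂Pr
      = ∑ e : E, (Pr (A e)).toReal * μw e := by
    simp_rw [hrepr]
    rw [integral_finset_sum _ (fun e _ => hint e)]
    exact Finset.sum_congr rfl fun e _ => by
      rw [integral_indicator_const _ (hAmeas e), smul_eq_mul, measureReal_def]
  rw [hIeq]
  -- the two parts of the sum
  set tF : Finset E := Finset.univ.filter (fun f => f ∈ Tstar) with htF
  have hwTs : Multigraph.weight μw Tstar = ∑ f ∈ tF, μw f := by
    rw [weight_eq_sum μw _ (Set.toFinite _)]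
    apply Finset.sum_congr _ (fun _ _ => rfl)
    ext f; simp [htF]
  rw [← Finset.sum_filter_add_sum_filter_not Finset.univ (fun e => e ∈ Tstar)]
  have hpart1 : ∑ e ∈ Finset.univ.filter (fun e => e ∈ Tstar), (Pr (A e)).toReal * μw e
      ≤ ∑ f ∈ tF, μw f := by
    refine Finset.sum_le_sum fun e he => ?_
    have h1 : (Pr (A e)).toReal ≤ 1 := by
      simpa using ENNReal.toReal_mono ENNReal.one_ne_top prob_le_one
    nlinarith [hμw0 e]
  -- part 2
  set K : E → Finset E :=
    fun f => Finset.univ.filter (fun e => e ∉ Tstar ∧ e ∈ G.fundCut Tstar f) with hK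
  set D : E → Finset E :=
    fun e => Finset.univ.filter (fun f => f ∈ Tstar ∧ e ∈ G.fundCut Tstar f) with hD
  have hpart2 : ∑ e ∈ Finset.univ.filter (fun e => e ∉ Tstar), (Pr (A e)).toReal * μw e
      ≤ ∑ f ∈ tF, ((b : ℝ) - 1) * μw f := by
    have hsingle : ∀ e, e ∉ Tstar → (Pr (A e)).toReal * μw e
        ≤ ∑ f ∈ D e, 1 / (lam e + lam f) := by
      intro e heTs
      have hsub : A e ⊆ ⋃ f ∈ D e, {x : E → ℝ | x e ≤ x f} := by
        intro x hx
        obtain ⟨f, hfTs, hcut, hle⟩ := key_step (hopt x).1 hTs (hopt x).2 hx heTs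
        refine Set.mem_biUnion ?_ hle
        simp only [hD]
        exact Finset.mem_filter.mpr ⟨Finset.mem_univ _, hfTs, hcut⟩
      have hmb : Pr (A e) ≤ ∑ f ∈ D e, ENNReal.ofReal (lam e / (lam e + lam f)) := by
        refine le_trans (measure_mono hsub) ?_
        refine le_trans (measure_biUnion_finset_le _ _) ?_
        refine Finset.sum_le_sum fun f hf => ?_
        have hef : e ≠ f := by
          simp only [hD, Finset.mem_filter] at hf
          exact fun h => heTs (h ▸ hf.2.1)
        exact le_of_eq (exp_pair_prob lam hlam hef)
      have htr : (Pr (A e)).toReal ≤ ∑ f ∈ D e, lam e / (lam e + lam f) := by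
        have h1 := ENNReal.toReal_mono
          (ENNReal.sum_ne_top.mpr fun f _ => ENNReal.ofReal_ne_top) hmb
        rw [ENNReal.toReal_sum (fun f _ => ENNReal.ofReal_ne_top)] at h1
        refine h1.trans (le_of_eq (Finset.sum_congr rfl fun f _ => ?_))
        exact ENNReal.toReal_ofReal
          (div_nonneg (hlam e).le (by have := hlam e; have := hlam f; linarith))
      calc (Pr (A e)).toReal * μw e ≤ (∑ f ∈ D e, lam e / (lam e + lam f)) * μw e :=
            mul_le_mul_of_nonneg_right htr (hμw0 e)
        _ = ∑ f ∈ D e, (lam e / (lam e + lam f)) * μw e := by rw [Finset.sum_mul]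
        _ = ∑ f ∈ D e, 1 / (lam e + lam f) := Finset.sum_congr rfl fun f _ => by
              have he0 : lam e ≠ 0 := (hlam e).ne'
              have hef0 : lam e + lam f ≠ 0 := by have := hlam e; have := hlam f; positivity
              simp only [hμw]
              field_simp
    have hsum2 : ∑ e ∈ Finset.univ.filter (fun e => e ∉ Tstar), (Pr (A e)).toReal * μw e
        ≤ ∑ e ∈ Finset.univ.filter (fun e => e ∉ Tstar), ∑ f ∈ D e, 1 / (lam e + lam f) :=
      Finset.sum_le_sum fun e he => hsingle e (by simpa using (Finset.mem_filter.mp he).2)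
    have hswap : ∑ e ∈ Finset.univ.filter (fun e => e ∉ Tstar), ∑ f ∈ D e, 1 / (lam e + lam f)
        = ∑ f ∈ tF, ∑ e ∈ K f, 1 / (lam e + lam f) := by
      refine Finset.sum_comm' ?_
      intro e f
      simp only [htF, hD, hK, Finset.mem_filter, Finset.mem_univ, true_and]
      tauto
    refine hsum2.trans (le_of_le_of_eq (le_of_eq hswap) rfl |>.trans ?_)
    refine Finset.sum_le_sum fun f hf => ?_
    have hfTs : f ∈ Tstar := by simpa [htF] using hf
    have hb1 : 1 ≤ (G.fundCut Tstar f).ncard := one_le_fundCut_ncard hTs hfTs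
    have hbb : (G.fundCut Tstar f).ncard ≤ b := fundCut_ncard_le hTs hfTs
    have hKsub : K f ⊆ (Set.toFinite (G.fundCut Tstar f \ {f})).toFinset := by
      intro e he
      simp only [hK, Finset.mem_filter] at he
      simp only [Set.Finite.mem_toFinset, Set.mem_diff, Set.mem_singleton_iff]
      exact ⟨he.2.2, fun h => he.2.1 (h ▸ hfTs)⟩
    have hKcard : (K f).card ≤ b - 1 := by
      have h1 := Finset.card_le_card hKsub
      rw [← Set.ncard_eq_toFinset_card _ (Set.toFinite (G.fundCut Tstar f \ {f}))] at h1
      have h3 : (G.fundCut Tstar f \ {f}).ncard = (G.fundCut Tstar f).ncard - 1 :=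
        Set.ncard_diff_singleton_of_mem (self_mem_fundCut hTs.2 hfTs)
      omega
    have hterm : ∀ e ∈ K f, 1 / (lam e + lam f) ≤ μw f := by
      intro e he
      simp only [hμw]
      apply one_div_le_one_div_of_le (hlam f)
      have := hlam e
      linarith
    calc ∑ e ∈ K f, 1 / (lam e + lam f) ≤ (K f).card • μw f :=
          Finset.sum_le_card_nsmul _ _ _ hterm
      _ = ((K f).card : ℝ) * μw f := nsmul_eq_mul _ _
      _ ≤ ((b : ℝ) - 1) * μw f := by
          refine mul_le_mul_of_nonneg_right ?_ (hμw0 f)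
          have h2 : ((K f).card : ℝ) ≤ ((b - 1 : ℕ) : ℝ) := Nat.cast_le.mpr hKcard
          refine h2.trans ?_
          rw [Nat.cast_sub (hb1.trans hbb)]
          simp
  refine le_trans (add_le_add hpart1 hpart2) (le_of_eq ?_)
  rw [hwTs, ← Finset.mul_sum]
  ring
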